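/- arXiv:2401.05795 — 3 statements merged into one kernel-verified Lean document; each statement's English description precedes it below -/
import Mathlib

section
/- Let w = (u,v) solve u' = u(1+O₁), v' = -v(1+O₁) with |O₁| ≤ Cρ in V_ρ, with initial condition in Σ¹_{a,δ} = {0 < u < δ, v = a} where 0 < δ < a/2 ≤ ρ/2. Then the solution exits through {u = a} at a time s*, and at that time v(s*) satisfies u₀^{1+3Ca} ≤ v(s*) ≤ u₀^{1-2Ca}, where u₀ = u(0). -/
/-!
Grönwall's inequality turns the differential inequalities into the exponential bounds
`u₀ e^{(1-Ca)s} ≤ u(s) ≤ u₀ e^{(1+Ca)s}` and `a e^{-(1+Ca)s} ≤ v(s) ≤ a e^{-(1-Ca)s}`.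
At the exit time `u(s*) = a`, so the first pair pins `s*` between `log(a/u₀)/(1+Ca)` and
`log(a/u₀)/(1-Ca)`. Inserting this into the second pair and using `log a ≤ 0` puts `log v(s*)`
between `(1+Ca)/(1-Ca) · log u₀` and `(1-Ca)/(1+Ca) · log u₀`, and for `Ca ≤ 1/3` these
factors satisfy `(1+Ca)/(1-Ca) ≤ 1+3Ca` and `(1-Ca)/(1+Ca) ≥ 1-2Ca`.
-/

open Real Set

theorem le_mul_exp_of_deriv_le_mul {f f' : ℝ → ℝ} {k t₀ t₁ : ℝ} (h : t₀ ≤ t₁)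
    (hf : ∀ t ∈ Icc t₀ t₁, HasDerivAt f (f' t) t) (hk : ∀ t ∈ Icc t₀ t₁, f' t ≤ k * f t) :
    f t₁ ≤ f t₀ * exp (k * (t₁ - t₀)) := by
  rw [← gronwallBound_ε0]
  refine le_gronwallBound_of_liminf_deriv_right_le
    (fun t ht => (hf t ht).continuousAt.continuousWithinAt)
    (fun t ht _ hr => (hf t (Ico_subset_Icc_self ht)).hasDerivWithinAt.liminf_right_slope_le hr)
    le_rfl (fun t ht => by simpa using hk t (Ico_subset_Icc_self ht)) t₁ (right_mem_Icc.2 h)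

theorem mul_exp_le_of_mul_le_deriv {f f' : ℝ → ℝ} {k t₀ t₁ : ℝ} (h : t₀ ≤ t₁)
    (hf : ∀ t ∈ Icc t₀ t₁, HasDerivAt f (f' t) t) (hk : ∀ t ∈ Icc t₀ t₁, k * f t ≤ f' t) :
    f t₀ * exp (k * (t₁ - t₀)) ≤ f t₁ := by
  simpa using le_mul_exp_of_deriv_le_mul (f := -f) (f' := -f') h (fun t ht => (hf t ht).neg)
    (fun t ht => by simpa using hk t ht)

theorem log_le_log_add_of_le_mul_exp {x y t : ℝ} (hx : 0 < x) (h : x ≤ y * exp t) :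
    log x ≤ log y + t := by
  have hy : 0 < y := pos_of_mul_pos_left (hx.trans_le h) (exp_pos t).le
  rw [← log_exp t, ← log_mul hy.ne' (exp_pos t).ne']
  exact log_le_log hx h

theorem log_add_le_log_of_mul_exp_le {x y t : ℝ} (hy : 0 < y) (h : y * exp t ≤ x) :
    log y + t ≤ log x := by
  rw [← log_exp t, ← log_mul hy.ne' (exp_pos t).ne']
  exact log_le_log (by positivity) h

theorem log_exit_value_bounds {c la lu lv s : ℝ} (hc : 0 ≤ c) (hc3 : c ≤ 1 / 3) (hla : la ≤ 0)
    (hs : 0 ≤ s)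
    (hu_lo : la ≤ lu + (1 + c) * s) (hu_hi : lu + (1 - c) * s ≤ la)
    (hv_lo : la - (1 + c) * s ≤ lv) (hv_hi : lv ≤ la - (1 - c) * s) :
    (1 + 3 * c) * lu ≤ lv ∧ lv ≤ (1 - 2 * c) * lu := by
  have hlu : lu ≤ la := by nlinarith
  constructor
  · nlinarith [mul_nonneg hc (sub_nonneg.2 hc3), mul_le_mul_of_nonneg_left hu_hi hc]
  · nlinarith

theorem stmt_8_general (C ρ a u₀ sstar : ℝ) (hC : 0 < C) (hρ : ρ < 1) (ha : 0 < a)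
    (haρ : a ≤ ρ) (hCa : C * a < 1 / 8)
    (u v : ℝ → ℝ) (hu0 : u 0 = u₀) (hv0 : v 0 = a)
    (hs : 0 ≤ sstar) (hexit : u sstar = a)
    (hud : ∀ s ∈ Set.Icc (0:ℝ) sstar, HasDerivAt u (deriv u s) s)
    (hvd : ∀ s ∈ Set.Icc (0:ℝ) sstar, HasDerivAt v (deriv v s) s)
    (hui : ∀ s ∈ Set.Icc (0:ℝ) sstar,
      (1 - C * a) * u s ≤ deriv u s ∧ deriv u s ≤ (1 + C * a) * u s)
    (hvi : ∀ s ∈ Set.Icc (0:ℝ) sstar,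
      -(1 + C * a) * v s ≤ deriv v s ∧ deriv v s ≤ -(1 - C * a) * v s) :
    u₀ ^ ((1:ℝ) + 3 * C * a) ≤ v sstar ∧ v sstar ≤ u₀ ^ ((1:ℝ) - 2 * C * a) := by
  set c := C * a
  have hu_lo : a ≤ u₀ * exp ((1 + c) * sstar) := by
    simpa [hu0, hexit] using le_mul_exp_of_deriv_le_mul hs hud (fun s hs => (hui s hs).2)
  have hu_hi : u₀ * exp ((1 - c) * sstar) ≤ a := by
    simpa [hu0, hexit] using mul_exp_le_of_mul_le_deriv hs hud (fun s hs => (hui s hs).1)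
  have hv_lo : a * exp (-(1 + c) * sstar) ≤ v sstar := by
    simpa [hv0] using mul_exp_le_of_mul_le_deriv hs hvd (fun s hs => (hvi s hs).1)
  have hv_hi : v sstar ≤ a * exp (-(1 - c) * sstar) := by
    simpa [hv0] using le_mul_exp_of_deriv_le_mul hs hvd (fun s hs => (hvi s hs).2)
  have hu₀ : 0 < u₀ := pos_of_mul_pos_left (ha.trans_le hu_lo) (exp_pos _).le
  have hv : 0 < v sstar := (by positivity : (0:ℝ) < _).trans_le hv_lo
  have hla : log a ≤ 0 := log_nonpos ha.le (by linarith)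
  obtain ⟨hlo, hhi⟩ := log_exit_value_bounds (c := c) (la := log a) (lu := log u₀) (lv := log (v sstar))
    (mul_pos hC ha).le (by linarith) hla hs
    (log_le_log_add_of_le_mul_exp ha hu_lo) (log_add_le_log_of_mul_exp_le hu₀ hu_hi)
    (by linarith [log_add_le_log_of_mul_exp_le ha hv_lo])
    (by linarith [log_le_log_add_of_le_mul_exp hv hv_hi])
  rw [rpow_le_iff_le_log hu₀ hv, le_rpow_iff_log_le hv hu₀, mul_assoc, mul_assoc]
  exact ⟨hlo, hhi⟩

/-- A solution of `u' = u(1+O₁)`, `v' = -v(1+O₁)`, `|O₁| ≤ Ca`, starting on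
`Σ¹_{a,δ} = {0 < u < δ, v = a}` with `0 < δ < a/2 ≤ ρ/2`, exits through `{u = a}`
at a time `s*` where `u₀^{1+3Ca} ≤ v(s*) ≤ u₀^{1-2Ca}`. -/
theorem stmt_8 (C ρ a δ u₀ sstar : ℝ) (hC : 0 < C) (hρ : ρ < 1) (ha : 0 < a)
    (haρ : a ≤ ρ) (hCa : C * a < 1 / 8) (hδ : 0 < δ) (hδa : δ < a / 2)
    (u v : ℝ → ℝ) (hu0 : u 0 = u₀) (hv0 : v 0 = a)
    (hu₀ : 0 < u₀) (hu₀δ : u₀ < δ)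
    (hs : 0 ≤ sstar) (hexit : u sstar = a)
    (hud : ∀ s ∈ Set.Icc (0:ℝ) sstar, HasDerivAt u (deriv u s) s)
    (hvd : ∀ s ∈ Set.Icc (0:ℝ) sstar, HasDerivAt v (deriv v s) s)
    (hui : ∀ s ∈ Set.Icc (0:ℝ) sstar,
      (1 - C * a) * u s ≤ deriv u s ∧ deriv u s ≤ (1 + C * a) * u s)
    (hvi : ∀ s ∈ Set.Icc (0:ℝ) sstar,
      -(1 + C * a) * v s ≤ deriv v s ∧ deriv v s ≤ -(1 - C * a) * v s)
    (hin : ∀ s ∈ Set.Icc (0:ℝ) sstar, 0 < u s ∧ u s ≤ a ∧ 0 < v s ∧ v s ≤ a) :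
    u₀ ^ ((1:ℝ) + 3 * C * a) ≤ v sstar ∧ v sstar ≤ u₀ ^ ((1:ℝ) - 2 * C * a) :=
  stmt_8_general C ρ a u₀ sstar hC hρ ha haρ hCa u v hu0 hv0 hs hexit hud hvd hui hvi
end

section
/- Let L⁺_in(v,θ) = Σ_{k≥1} (V^[k]/8) e^{ik(θ-v)} ∫_{-∞}^v s^{-2} e^{iks} ds + (conjugate terms for k ≤ -1), i.e., L⁺_in = G(V(θ)/(8v²)) where G integrates along characteristics from -∞. If V^[0] = 0 and |V^[k]| ≤ Ke^{-|k|σ₀}, then L⁺_in, ∂_θ L⁺_in belong to the weighted space Y₂ (i.e., sup_v |v² L⁺_in^[k](v)| e^{|k|σ} summable) and ∂_v L⁺_in ∈ Y₃, with norms bounded by a constant independent of κ. -/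
open MeasureTheory

/-- The inner sectorial domain `D⁺_{κ,in}`. -/
def Din (β₁ κ : ℝ) : Set ℂ :=
  {v : ℂ | v.im < -Real.tan β₁ * v.re - κ ∨ Real.tan β₁ * v.re + κ < v.im}

/-- The Fourier coefficients of `L⁺_in`: `L⁺_in^[k](v) = (V^[k]/8)∫_{-∞}^v s^{-2} e^{ik(s-v)} ds`. -/
noncomputable def Lin (Vk : ℤ → ℂ) (k : ℤ) (v : ℂ) : ℂ :=
  (Vk k / 8) * ∫ s in Set.Iic (0:ℝ), ((v + (s : ℂ)) ^ 2)⁻¹ * Complex.exp (Complex.I * k * s)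

/-!
Points `v` of the sector see the whole ray `v + (-∞, 0]` at a distance comparable to `‖v‖ + |s|`:
`‖v + s‖² ≥ ρ² (‖v‖² + s²)` with `ρ > 0` depending on `β₁` only, not on `κ`. Hence
`Jₙ(v) = charIntegral k n v = ∫_{-∞}^0 (v + s)⁻ⁿ e^{iks} ds` is at most `π / (2 ρⁿ ‖v‖ⁿ⁻¹)`,
one power of `‖v‖` short of what is claimed. Integrating by parts, `ik Jₙ = v⁻ⁿ + n Jₙ₊₁`
recovers that power for `k ≠ 0`, uniformly in `k`, which bounds `L`, `∂_θ L = ik L` and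
`∂_v L = -2 (V^[k]/8) J₃`. Against `|V^[k]| ≤ K₀ e^{-|k|σ₀}` the weights `e^{|k|σ}` are then
summable.
-/

open Set Real Filter Topology

theorem hasDerivAt_inv_pow {𝕜 : Type*} [NontriviallyNormedField 𝕜] (n : ℕ) {z : 𝕜}
    (hz : z ≠ 0) : HasDerivAt (fun z => (z ^ n)⁻¹) (-n * (z ^ (n + 1))⁻¹) z := by
  have := hasDerivAt_zpow (-(n : ℤ)) z (Or.inl hz)
  simp only [zpow_neg, zpow_natCast] at this
  refine this.congr_deriv ?_
  rw [show -(n : ℤ) - 1 = -((n + 1 : ℕ) : ℤ) by push_cast; ring, zpow_neg, zpow_natCast]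
  push_cast
  ring

theorem integrable_inv_sq_add_sq {r : ℝ} (hr : 0 < r) :
    Integrable fun s : ℝ => (r ^ 2 + s ^ 2)⁻¹ :=
  ((integrable_inv_one_add_sq.comp_div hr.ne').const_mul (r ^ 2)⁻¹).congr <|
    ae_of_all _ fun s => by field_simp

theorem integral_Iic_zero_inv_sq_add_sq {r : ℝ} (hr : 0 < r) :
    ∫ s in Iic (0 : ℝ), (r ^ 2 + s ^ 2)⁻¹ = π / (2 * r) := by
  have hderiv : ∀ s ∈ Iic (0 : ℝ),
      HasDerivAt (fun s => r⁻¹ * arctan (s / r)) (r ^ 2 + s ^ 2)⁻¹ s := fun s _ =>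
    (((hasDerivAt_id s).div_const r).arctan.const_mul r⁻¹).congr_deriv (by rw [id]; field_simp)
  have hlim : Tendsto (fun s => r⁻¹ * arctan (s / r)) atBot (𝓝 (r⁻¹ * -(π / 2))) :=
    ((tendsto_arctan_atBot.mono_right nhdsWithin_le_nhds).comp
      (tendsto_id.atBot_div_const hr)).const_mul _
  rw [integral_Iic_of_hasDerivAt_of_tendsto' hderiv (integrable_inv_sq_add_sq hr).integrableOn
    hlim]
  simp only [zero_div, arctan_zero, mul_zero]
  field_simp
  ring

def RaySeparated (ρ : ℝ) (v : ℂ) : Prop :=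
  ∀ s : ℝ, s ≤ 0 → ρ ^ 2 * (‖v‖ ^ 2 + s ^ 2) ≤ ‖v + s‖ ^ 2

theorem raySeparated_of_mul_re_le_abs_im {t : ℝ} (ht : 0 ≤ t) {v : ℂ}
    (hv : t * v.re ≤ |v.im|) : RaySeparated (t / (2 * (t + 1))) v := by
  intro s hs
  have hnorm : ‖v‖ ^ 2 = v.re ^ 2 + v.im ^ 2 := by
    rw [Complex.sq_norm, Complex.normSq_apply]; ring
  have hnorm_add : ‖v + s‖ ^ 2 = (v.re + s) ^ 2 + v.im ^ 2 := by
    rw [Complex.sq_norm, Complex.normSq_apply, Complex.add_re, Complex.add_im, Complex.ofReal_re,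
      Complex.ofReal_im, add_zero]
    ring
  rw [div_pow, div_mul_eq_mul_div, div_le_iff₀ (by positivity), hnorm, hnorm_add]
  rcases le_or_gt v.re 0 with hre | hre
  · nlinarith [mul_nonneg (neg_nonneg.2 hre) (neg_nonneg.2 hs), sq_nonneg t, sq_nonneg v.im,
      sq_nonneg (v.re + s)]
  · -- here `t² re² ≤ im²`, and `t² s² ≤ 2 t² (re + s)² + 2 t² re²`
    have hsq : (t * v.re) ^ 2 ≤ v.im ^ 2 := by
      rw [← sq_abs v.im]; exact pow_le_pow_left₀ (by positivity) hv 2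
    nlinarith [mul_nonneg (sq_nonneg t) (sq_nonneg (2 * v.re + s)),
      mul_nonneg (by positivity : 0 ≤ 3 * t ^ 2 + 8 * t + 1) (sq_nonneg v.im),
      mul_nonneg (by positivity : 0 ≤ 2 * t ^ 2 + 8 * t + 4) (sq_nonneg (v.re + s))]

namespace RaySeparated

variable {ρ : ℝ} {v : ℂ} {s : ℝ}

theorem mul_norm_le (hv : RaySeparated ρ v) (hρ : 0 ≤ ρ) (hs : s ≤ 0) : ρ * ‖v‖ ≤ ‖v + s‖ :=
  (sq_le_sq₀ (by positivity) (norm_nonneg _)).1 <| by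
    nlinarith [hv s hs, sq_nonneg s, sq_nonneg ρ]

theorem add_ne_zero (hv : RaySeparated ρ v) (hρ : 0 < ρ) (hv0 : v ≠ 0) (hs : s ≤ 0) :
    v + s ≠ 0 :=
  norm_pos_iff.1 <| (mul_pos hρ (norm_pos_iff.2 hv0)).trans_le (hv.mul_norm_le hρ.le hs)

theorem pow_mul_le_norm_pow (hv : RaySeparated ρ v) (hρ : 0 ≤ ρ) (hs : s ≤ 0) (m : ℕ) :
    ρ ^ (m + 2) * ‖v‖ ^ m * (‖v‖ ^ 2 + s ^ 2) ≤ ‖v + s‖ ^ (m + 2) :=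
  calc ρ ^ (m + 2) * ‖v‖ ^ m * (‖v‖ ^ 2 + s ^ 2)
      = (ρ * ‖v‖) ^ m * (ρ ^ 2 * (‖v‖ ^ 2 + s ^ 2)) := by ring
    _ ≤ ‖v + s‖ ^ m * ‖v + s‖ ^ 2 := by
      gcongr
      · exact hv.mul_norm_le hρ hs
      · exact hv s hs
    _ = ‖v + s‖ ^ (m + 2) := by ring

end RaySeparated

noncomputable def charIntegrand (k : ℤ) (n : ℕ) (v : ℂ) (s : ℝ) : ℂ :=
  ((v + s) ^ n)⁻¹ * Complex.exp (Complex.I * k * s)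

noncomputable def charIntegral (k : ℤ) (n : ℕ) (v : ℂ) : ℂ :=
  ∫ s in Iic (0 : ℝ), charIntegrand k n v s

section CharIntegral

variable {ρ : ℝ} {v : ℂ} {k : ℤ} {n : ℕ}

theorem measurable_charIntegrand (k : ℤ) (n : ℕ) (v : ℂ) : Measurable (charIntegrand k n v) := by
  unfold charIntegrand
  fun_prop

theorem norm_charIntegrand (k : ℤ) (n : ℕ) (v : ℂ) (s : ℝ) :
    ‖charIntegrand k n v s‖ = (‖v + s‖ ^ n)⁻¹ := by
  rw [charIntegrand, norm_mul, norm_inv, norm_pow,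
    show Complex.I * k * s = ((k * s : ℝ) : ℂ) * Complex.I by push_cast; ring,
    Complex.norm_exp_ofReal_mul_I, mul_one]

theorem hasDerivAt_charIntegrand {s : ℝ} (hvs : v + s ≠ 0) :
    HasDerivAt (charIntegrand k n v)
      (Complex.I * k * charIntegrand k n v s - n * charIntegrand k (n + 1) v s) s := by
  have h := (((hasDerivAt_inv_pow n hvs).comp (s : ℂ) ((hasDerivAt_id _).const_add v)).mul
    ((hasDerivAt_id _).const_mul (Complex.I * k)).cexp).comp_ofReal
  refine h.congr_deriv ?_
  simp only [charIntegrand, Function.comp_def, id]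
  ring

theorem hasDerivAt_charIntegrand_param {s : ℝ} (hvs : v + s ≠ 0) :
    HasDerivAt (fun x => charIntegrand k n x s) (-n * charIntegrand k (n + 1) v s) v := by
  have h := ((hasDerivAt_inv_pow n hvs).comp v ((hasDerivAt_id v).add_const (s : ℂ))).mul_const
    (Complex.exp (Complex.I * k * s))
  refine h.congr_deriv ?_
  simp only [charIntegrand, mul_one]
  ring

namespace RaySeparated

theorem norm_charIntegrand_le (hv : RaySeparated ρ v) (hρ : 0 < ρ) (hv0 : v ≠ 0) (hn : 2 ≤ n)
    {s : ℝ} (hs : s ≤ 0) :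
    ‖charIntegrand k n v s‖ ≤ (ρ ^ n * ‖v‖ ^ (n - 2))⁻¹ * (‖v‖ ^ 2 + s ^ 2)⁻¹ := by
  obtain ⟨m, rfl⟩ := Nat.exists_eq_add_of_le' hn
  rw [norm_charIntegrand, Nat.add_sub_cancel, ← mul_inv]
  have := norm_pos_iff.2 hv0
  exact inv_anti₀ (by positivity) (hv.pow_mul_le_norm_pow hρ.le hs m)

theorem integrableOn_charIntegrand (hv : RaySeparated ρ v) (hρ : 0 < ρ) (hv0 : v ≠ 0)
    (hn : 2 ≤ n) : IntegrableOn (charIntegrand k n v) (Iic 0) := by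
  refine Integrable.mono'
    ((integrable_inv_sq_add_sq (norm_pos_iff.2 hv0)).const_mul
      (ρ ^ n * ‖v‖ ^ (n - 2))⁻¹).integrableOn
    (measurable_charIntegrand k n v).aestronglyMeasurable ?_
  filter_upwards [self_mem_ae_restrict measurableSet_Iic] with s hs
  exact hv.norm_charIntegrand_le hρ hv0 hn hs

theorem pow_pred_mul_norm_charIntegral_le (hv : RaySeparated ρ v) (hρ : 0 < ρ) (hv0 : v ≠ 0)
    (hn : 2 ≤ n) :
    ‖v‖ ^ (n - 1) * ‖charIntegral k n v‖ ≤ π / (2 * ρ ^ n) := by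
  have hr := norm_pos_iff.2 hv0
  have hint : ‖charIntegral k n v‖ ≤ (ρ ^ n * ‖v‖ ^ (n - 2))⁻¹ * (π / (2 * ‖v‖)) := by
    rw [← integral_Iic_zero_inv_sq_add_sq hr, ← integral_const_mul]
    refine norm_integral_le_of_norm_le
      ((integrable_inv_sq_add_sq hr).const_mul _).integrableOn ?_
    filter_upwards [self_mem_ae_restrict measurableSet_Iic] with s hs
    exact hv.norm_charIntegrand_le hρ hv0 hn hs
  obtain ⟨m, rfl⟩ := Nat.exists_eq_add_of_le' hn
  calc ‖v‖ ^ (m + 2 - 1) * ‖charIntegral k (m + 2) v‖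
      ≤ ‖v‖ ^ (m + 1) * ((ρ ^ (m + 2) * ‖v‖ ^ m)⁻¹ * (π / (2 * ‖v‖))) := by
        simpa using mul_le_mul_of_nonneg_left hint (by positivity : 0 ≤ ‖v‖ ^ (m + 1))
    _ = π / (2 * ρ ^ (m + 2)) := by
        field_simp
        ring

theorem I_mul_charIntegral_eq (hv : RaySeparated ρ v) (hρ : 0 < ρ) (hv0 : v ≠ 0) (hn : 2 ≤ n) :
    Complex.I * k * charIntegral k n v = (v ^ n)⁻¹ + n * charIntegral k (n + 1) v := by
  have hderiv : ∀ s ∈ Iic (0 : ℝ), HasDerivAt (charIntegrand k n v)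
      (Complex.I * k * charIntegrand k n v s - n * charIntegrand k (n + 1) v s) s :=
    fun s hs => hasDerivAt_charIntegrand (hv.add_ne_zero hρ hv0 hs)
  have hint_n := hv.integrableOn_charIntegrand (k := k) hρ hv0 hn
  have hint_succ := hv.integrableOn_charIntegrand (k := k) hρ hv0 (by omega : 2 ≤ n + 1)
  have hint := (hint_n.const_mul (Complex.I * k)).sub (hint_succ.const_mul (n : ℂ))
  have hftc := integral_Iic_of_hasDerivAt_of_tendsto' hderiv hint
    (tendsto_zero_of_hasDerivAt_of_integrableOn_Iic hderiv hint hint_n)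
  rw [integral_sub (hint_n.const_mul _) (hint_succ.const_mul _), integral_const_mul,
    integral_const_mul] at hftc
  have hzero : charIntegrand k n v 0 = (v ^ n)⁻¹ := by simp [charIntegrand]
  rw [hzero, sub_zero] at hftc
  rw [charIntegral, charIntegral]
  linear_combination hftc

theorem pow_mul_norm_I_mul_charIntegral_le (hv : RaySeparated ρ v) (hρ : 0 < ρ) (hv0 : v ≠ 0)
    (hn : 2 ≤ n) :
    ‖v‖ ^ n * ‖Complex.I * k * charIntegral k n v‖ ≤ 1 + n * (π / (2 * ρ ^ (n + 1))) := by
  have hnext := hv.pow_pred_mul_norm_charIntegral_le (k := k) hρ hv0 (by omega : 2 ≤ n + 1)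
  rw [Nat.add_sub_cancel] at hnext
  have hr := norm_pos_iff.2 hv0
  rw [hv.I_mul_charIntegral_eq hρ hv0 hn]
  calc ‖v‖ ^ n * ‖(v ^ n)⁻¹ + n * charIntegral k (n + 1) v‖
      ≤ ‖v‖ ^ n * (‖(v ^ n)⁻¹‖ + ‖n * charIntegral k (n + 1) v‖) := by
        gcongr
        exact norm_add_le _ _
    _ = ‖v‖ ^ n * ‖(v ^ n)⁻¹‖ + n * (‖v‖ ^ n * ‖charIntegral k (n + 1) v‖) := by
        rw [norm_mul, Complex.norm_natCast]
        ring
    _ ≤ 1 + n * (π / (2 * ρ ^ (n + 1))) := by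
        rw [norm_inv, norm_pow, mul_inv_cancel₀ (by positivity)]
        gcongr

theorem pow_mul_norm_charIntegral_le_of_ne_zero (hv : RaySeparated ρ v) (hρ : 0 < ρ) (hv0 : v ≠ 0)
    (hn : 2 ≤ n) (hk : k ≠ 0) :
    ‖v‖ ^ n * ‖charIntegral k n v‖ ≤ 1 + n * (π / (2 * ρ ^ (n + 1))) := by
  refine le_trans ?_ (hv.pow_mul_norm_I_mul_charIntegral_le (k := k) hρ hv0 hn)
  have hk1 : (1 : ℝ) ≤ |(k : ℝ)| := by exact_mod_cast Int.one_le_abs hk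
  rw [norm_mul, norm_mul, Complex.norm_I, one_mul, Complex.norm_intCast]
  gcongr
  exact le_mul_of_one_le_left (norm_nonneg _) hk1

end RaySeparated

theorem hasDerivAt_charIntegral {U : Set ℂ} (hU : IsOpen U)
    (hsep : ∀ x ∈ U, x ≠ 0 ∧ RaySeparated ρ x) (hρ : 0 < ρ) (hn : 2 ≤ n) (hv : v ∈ U) :
    HasDerivAt (charIntegral k n) (-n * charIntegral k (n + 1) v) v := by
  obtain ⟨hv0, hvsep⟩ := hsep v hv
  have hr : 0 < ‖v‖ / 2 := by have := norm_pos_iff.2 hv0; positivity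
  -- on `W` the moduli stay above `‖v‖ / 2`, which gives a dominating function
  set W := U ∩ {x | ‖v‖ / 2 < ‖x‖}
  have hW : W ∈ 𝓝 v := (hU.inter (isOpen_lt continuous_const continuous_norm)).mem_nhds
    ⟨hv, show ‖v‖ / 2 < ‖v‖ by linarith⟩
  set C := (n : ℝ) * (ρ ^ (n + 1) * (‖v‖ / 2) ^ (n + 1 - 2))⁻¹
  have hbound : ∀ᵐ s ∂(volume.restrict (Iic (0 : ℝ))), ∀ x ∈ W,
      ‖-(n : ℂ) * charIntegrand k (n + 1) x s‖ ≤ C * ((‖v‖ / 2) ^ 2 + s ^ 2)⁻¹ := by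
    filter_upwards [self_mem_ae_restrict measurableSet_Iic] with s hs x ⟨hxU, hxv⟩
    obtain ⟨hx0, hxsep⟩ := hsep x hxU
    rw [norm_mul, norm_neg, Complex.norm_natCast, mul_assoc]
    gcongr
    refine (hxsep.norm_charIntegrand_le hρ hx0 (by omega) hs).trans ?_
    gcongr <;> exact hxv.out.le
  have hdiff : ∀ᵐ s ∂(volume.restrict (Iic (0 : ℝ))), ∀ x ∈ W,
      HasDerivAt (fun y => charIntegrand k n y s) (-n * charIntegrand k (n + 1) x s) x := by
    filter_upwards [self_mem_ae_restrict measurableSet_Iic] with s hs x ⟨hxU, _⟩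
    obtain ⟨hx0, hxsep⟩ := hsep x hxU
    exact hasDerivAt_charIntegrand_param (hxsep.add_ne_zero hρ hx0 hs)
  have h := (hasDerivAt_integral_of_dominated_loc_of_deriv_le hW
    (Eventually.of_forall fun x => (measurable_charIntegrand k n x).aestronglyMeasurable)
    (hvsep.integrableOn_charIntegrand hρ hv0 hn)
    ((measurable_charIntegrand k (n + 1) v).aestronglyMeasurable.const_mul _)
    hbound ((integrable_inv_sq_add_sq hr).const_mul C).integrableOn hdiff).2
  rwa [integral_const_mul] at h

end CharIntegral

theorem ne_zero_of_mem_Din {β₁ κ : ℝ} (hκ : 0 ≤ κ) {v : ℂ} (hv : v ∈ Din β₁ κ) : v ≠ 0 := by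
  rintro rfl
  rcases hv with h | h <;>
    simp only [Complex.zero_im, Complex.zero_re, mul_zero, zero_add, zero_sub] at h <;> linarith

theorem mul_re_le_abs_im_of_mem_Din {β₁ κ : ℝ} (hκ : 0 ≤ κ) {v : ℂ} (hv : v ∈ Din β₁ κ) :
    tan β₁ * v.re ≤ |v.im| := by
  rcases hv with h | h
  · linarith [neg_abs_le v.im]
  · linarith [le_abs_self v.im]

theorem isOpen_Din (β₁ κ : ℝ) : IsOpen (Din β₁ κ) :=
  (isOpen_lt Complex.continuous_im (by fun_prop)).union
    (isOpen_lt (by fun_prop) Complex.continuous_im)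

-- `‖v‖ⁿ ‖Jₙ‖ ≤ 1 + n π / (2 ρⁿ⁺¹)`; `L` and `∂_θ L` carry `J₂ / 8`, and `∂_v L` carries `J₃ / 4`.
noncomputable def linBound (ρ : ℝ) : ℝ :=
  (1 + 2 * (π / (2 * ρ ^ 3))) / 8 + (1 + 3 * (π / (2 * ρ ^ 4))) / 4

theorem linBound_pos {ρ : ℝ} (hρ : 0 < ρ) : 0 < linBound ρ := by
  unfold linBound
  positivity

theorem Lin_eq_charIntegral (Vk : ℤ → ℂ) (k : ℤ) :
    Lin Vk k = fun v => Vk k / 8 * charIntegral k 2 v :=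
  rfl

theorem norm_Lin_weighted_le {ρ : ℝ} (hρ : 0 < ρ) {U : Set ℂ} (hU : IsOpen U)
    (hsep : ∀ x ∈ U, x ≠ 0 ∧ RaySeparated ρ x) {Vk : ℤ → ℂ} (hV0 : Vk 0 = 0) (k : ℤ) {v : ℂ}
    (hv : v ∈ U) :
    ‖v‖ ^ 2 * ‖Lin Vk k v‖ ≤ ‖Vk k‖ * linBound ρ ∧
      ‖v‖ ^ 2 * ‖Complex.I * k * Lin Vk k v‖ ≤ ‖Vk k‖ * linBound ρ ∧
      ‖v‖ ^ 3 * ‖deriv (Lin Vk k) v‖ ≤ ‖Vk k‖ * linBound ρ := by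
  rcases eq_or_ne k 0 with rfl | hk
  · have hLin : Lin Vk 0 = 0 := funext fun _ => by simp [Lin, hV0]
    simp [hLin, hV0]
  obtain ⟨hv0, hvsep⟩ := hsep v hv
  have hJ2 : ‖v‖ ^ 2 * ‖charIntegral k 2 v‖ ≤ 1 + 2 * (π / (2 * ρ ^ 3)) := by
    exact_mod_cast hvsep.pow_mul_norm_charIntegral_le_of_ne_zero hρ hv0 le_rfl hk
  have hIJ2 : ‖v‖ ^ 2 * ‖Complex.I * k * charIntegral k 2 v‖ ≤ 1 + 2 * (π / (2 * ρ ^ 3)) := by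
    exact_mod_cast hvsep.pow_mul_norm_I_mul_charIntegral_le (k := k) hρ hv0 le_rfl
  have hJ3 : ‖v‖ ^ 3 * ‖charIntegral k 3 v‖ ≤ 1 + 3 * (π / (2 * ρ ^ 4)) := by
    exact_mod_cast hvsep.pow_mul_norm_charIntegral_le_of_ne_zero hρ hv0 (by norm_num) hk
  have hderiv : deriv (Lin Vk k) v = Vk k / 8 * (-2 * charIntegral k 3 v) := by
    have h := (hasDerivAt_charIntegral (k := k) hU hsep hρ le_rfl hv).const_mul (Vk k / 8)
    exact_mod_cast h.deriv
  have hB2 : (1 + 2 * (π / (2 * ρ ^ 3))) / 8 ≤ linBound ρ := by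
    unfold linBound; have : 0 ≤ π / (2 * ρ ^ 4) := by positivity
    linarith
  have hB3 : (1 + 3 * (π / (2 * ρ ^ 4))) / 4 ≤ linBound ρ := by
    unfold linBound; have : 0 ≤ π / (2 * ρ ^ 3) := by positivity
    linarith
  refine ⟨?_, ?_, ?_⟩
  · calc ‖v‖ ^ 2 * ‖Lin Vk k v‖ = ‖Vk k‖ * ((‖v‖ ^ 2 * ‖charIntegral k 2 v‖) / 8) := by
          rw [Lin_eq_charIntegral, norm_mul, norm_div, RCLike.norm_ofNat]; ring
      _ ≤ ‖Vk k‖ * linBound ρ := by gcongr; linarith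
  · calc ‖v‖ ^ 2 * ‖Complex.I * k * Lin Vk k v‖
          = ‖Vk k‖ * ((‖v‖ ^ 2 * ‖Complex.I * k * charIntegral k 2 v‖) / 8) := by
          rw [Lin_eq_charIntegral, mul_left_comm, norm_mul, norm_div, RCLike.norm_ofNat]; ring
      _ ≤ ‖Vk k‖ * linBound ρ := by gcongr; linarith
  · calc ‖v‖ ^ 3 * ‖deriv (Lin Vk k) v‖ = ‖Vk k‖ * ((‖v‖ ^ 3 * ‖charIntegral k 3 v‖) / 4) := by
          rw [hderiv, norm_mul, norm_mul, norm_div, norm_neg, RCLike.norm_ofNat, RCLike.norm_ofNat]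
          ring
      _ ≤ ‖Vk k‖ * linBound ρ := by gcongr; linarith

theorem summable_exp_neg_mul_abs {a : ℝ} (ha : 0 < a) :
    Summable fun k : ℤ => exp (-a * (|k| : ℝ)) := by
  have h : Summable fun n : ℕ => exp (n * -a) := summable_exp_nat_mul_iff.2 (by linarith)
  refine Summable.of_nat_of_neg ?_ ?_ <;> simpa [mul_comm] using h

theorem summable_and_tsum_le_of_le_exp {M : ℤ → ℝ} {A σ σ₀ : ℝ} (hσ : σ < σ₀)
    (hM0 : ∀ k, 0 ≤ M k) (hM : ∀ k : ℤ, M k ≤ A * exp (-(|k| : ℝ) * σ₀)) :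
    (Summable fun k : ℤ => M k * exp ((|k| : ℝ) * σ)) ∧
      ∑' k : ℤ, M k * exp ((|k| : ℝ) * σ) ≤ A * ∑' k : ℤ, exp (-(σ₀ - σ) * (|k| : ℝ)) := by
  have hdom : ∀ k : ℤ, M k * exp ((|k| : ℝ) * σ) ≤ A * exp (-(σ₀ - σ) * (|k| : ℝ)) := fun k =>
    calc M k * exp ((|k| : ℝ) * σ) ≤ A * exp (-(|k| : ℝ) * σ₀) * exp ((|k| : ℝ) * σ) := by
          gcongr; exact hM k
      _ = A * exp (-(σ₀ - σ) * (|k| : ℝ)) := by rw [mul_assoc, ← exp_add]; ring_nf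
  have hsum := (summable_exp_neg_mul_abs (sub_pos.2 hσ)).mul_left A
  have hsummable := hsum.of_nonneg_of_le (fun k => by have := hM0 k; positivity) hdom
  exact ⟨hsummable, (hsummable.tsum_le_tsum hdom hsum).trans_eq tsum_mul_left⟩

theorem stmt_12_general (β₁ σ₀ σ K₀ : ℝ) (hβ : 0 < β₁) (hβ' : β₁ < Real.pi / 2)
    (hσσ₀ : σ < σ₀) (hK₀ : 0 < K₀) :
    ∃ K > 0, ∀ κ : ℝ, 1 ≤ κ → ∀ Vk : ℤ → ℂ, Vk 0 = 0 →
      (∀ k : ℤ, ‖Vk k‖ ≤ K₀ * Real.exp (-(|k| : ℝ) * σ₀)) →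
      (∀ k : ℤ, ∀ v ∈ Din β₁ κ,
        IntegrableOn
          (fun s : ℝ => ((v + (s : ℂ)) ^ 2)⁻¹ * Complex.exp (Complex.I * k * s))
          (Set.Iic 0)) ∧
      ∃ M : ℤ → ℝ,
        (∀ k : ℤ, ∀ v ∈ Din β₁ κ,
          ‖v‖ ^ 2 * ‖Lin Vk k v‖ ≤ M k ∧
          ‖v‖ ^ 2 * ‖Complex.I * k * Lin Vk k v‖ ≤ M k ∧
          ‖v‖ ^ 3 * ‖deriv (Lin Vk k) v‖ ≤ M k) ∧
        (Summable fun k : ℤ => M k * Real.exp ((|k| : ℝ) * σ)) ∧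
        ∑' k : ℤ, M k * Real.exp ((|k| : ℝ) * σ) ≤ K := by
  have ht : 0 < tan β₁ := tan_pos_of_pos_of_lt_pi_div_two hβ hβ'
  set ρ := tan β₁ / (2 * (tan β₁ + 1))
  have hρ : 0 < ρ := by positivity
  have hsep : ∀ κ : ℝ, 1 ≤ κ → ∀ x ∈ Din β₁ κ, x ≠ 0 ∧ RaySeparated ρ x := fun κ hκ x hx =>
    ⟨ne_zero_of_mem_Din (by linarith) hx,
      raySeparated_of_mul_re_le_abs_im ht.le (mul_re_le_abs_im_of_mem_Din (by linarith) hx)⟩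
  have hS : 0 < ∑' k : ℤ, exp (-(σ₀ - σ) * (|k| : ℝ)) :=
    (summable_exp_neg_mul_abs (sub_pos.2 hσσ₀)).tsum_pos (fun _ => (exp_pos _).le) 0 (exp_pos _)
  refine ⟨K₀ * linBound ρ * ∑' k : ℤ, exp (-(σ₀ - σ) * (|k| : ℝ)),
    mul_pos (mul_pos hK₀ (linBound_pos hρ)) hS, fun κ hκ Vk hV0 hVk => ?_⟩
  obtain ⟨hsummable, htsum⟩ := summable_and_tsum_le_of_le_exp (M := fun k => ‖Vk k‖ * linBound ρ)
    hσσ₀ (fun k => by have := linBound_pos hρ; positivity)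
    (fun k => by rw [mul_right_comm]; exact mul_le_mul_of_nonneg_right (hVk k) (linBound_pos hρ).le)
  refine ⟨fun k v hv => ?_, _, fun k v hv => ?_, hsummable, htsum⟩
  · obtain ⟨hv0, hvsep⟩ := hsep κ hκ v hv
    exact hvsep.integrableOn_charIntegrand hρ hv0 le_rfl
  · exact norm_Lin_weighted_le hρ (isOpen_Din β₁ κ) (hsep κ hκ) hV0 k hv

/-- If `V^[0] = 0` and `|V^[k]| ≤ K₀ e^{-|k|σ₀}`, then `L⁺_in` and `∂_θ L⁺_in`
belong to `Y₂` and `∂_v L⁺_in ∈ Y₃` on the inner domain `D⁺_{κ,in}`, with norms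
(for `0 < σ < σ₀`) bounded by a constant `K` independent of `κ ≥ 1`. -/
theorem stmt_12 (β₁ σ₀ σ K₀ : ℝ) (hβ : 0 < β₁) (hβ' : β₁ < Real.pi / 2)
    (hσ : 0 < σ) (hσσ₀ : σ < σ₀) (hK₀ : 0 < K₀) :
    ∃ K > 0, ∀ κ : ℝ, 1 ≤ κ → ∀ Vk : ℤ → ℂ, Vk 0 = 0 →
      (∀ k : ℤ, ‖Vk k‖ ≤ K₀ * Real.exp (-(|k| : ℝ) * σ₀)) →
      (∀ k : ℤ, ∀ v ∈ Din β₁ κ,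
        IntegrableOn
          (fun s : ℝ => ((v + (s : ℂ)) ^ 2)⁻¹ * Complex.exp (Complex.I * k * s))
          (Set.Iic 0)) ∧
      ∃ M : ℤ → ℝ,
        (∀ k : ℤ, ∀ v ∈ Din β₁ κ,
          ‖v‖ ^ 2 * ‖Lin Vk k v‖ ≤ M k ∧
          ‖v‖ ^ 2 * ‖Complex.I * k * Lin Vk k v‖ ≤ M k ∧
          ‖v‖ ^ 3 * ‖deriv (Lin Vk k) v‖ ≤ M k) ∧
        (Summable fun k : ℤ => M k * Real.exp ((|k| : ℝ) * σ)) ∧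
        ∑' k : ℤ, M k * Real.exp ((|k| : ℝ) * σ) ≤ K :=
  stmt_12_general β₁ σ₀ σ K₀ hβ hβ' hσσ₀ hK₀
end

section
/- For Im v < 0, the inner Melnikov potential L_in(v,θ) = -∫_{-∞}^{∞} (-V(θ+s-v)/(8s²)) ds, where the integral is along a horizontal line with Im s < 0, equals -Σ_{k≥1} (π k V^[k]/4) e^{ik(θ-v)}. In particular, ∫_{Im s = c} s^{-2} e^{iks} ds = -2πk for k ≥ 1 and = 0 for k ≤ -1, where c < 0. -/
/-!
Up to the factor `e^{-kc}`, the line integral is `∫ (t + ic)⁻² e^{ikt} dt`, an inverse Fourier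
transform. Instead of closing contours, observe that `(t + ic)⁻²` is itself (up to the scaling
`t = 2πξ` and a sign) the Fourier transform of the ramp `u ↦ u₊ e^{cu}`, integrable because
`c < 0`. Fourier inversion then gives `∫ (t + ic)⁻² e^{ikt} dt = -2π k₊ e^{ck}`, so the line
integral equals `-2π k₊` for every real `k`; its vanishing for `k ≤ 0` reflects the support of
the ramp. The formula for the potential follows term by term.
-/

open MeasureTheory Set Complex
open scoped FourierTransform Real

lemma integrableOn_Ioi_mul_cexp {a : ℂ} (ha : a.re < 0) :
    IntegrableOn (fun u : ℝ => (u : ℂ) * cexp (a * u)) (Ioi 0) := by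
  have hreal : IntegrableOn (fun u : ℝ => u * Real.exp (-(-a.re) * u)) (Ioi 0) := by
    simpa using integrableOn_rpow_mul_exp_neg_mul_rpow (p := 1) (s := 1) (by norm_num)
      (by norm_num) (neg_pos.2 ha)
  refine hreal.mono' (by fun_prop) ?_
  filter_upwards [ae_restrict_mem measurableSet_Ioi] with u (hu : 0 < u)
  simp [Complex.norm_exp, abs_of_pos hu]

lemma integral_Ioi_mul_cexp {a : ℂ} (ha : a.re < 0) :
    ∫ u in Ioi (0 : ℝ), (u : ℂ) * cexp (a * u) = (a ^ 2)⁻¹ := by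
  have ha0 : a ≠ 0 := by rintro rfl; simp at ha
  set F : ℝ → ℂ := fun u => (u / a - (a ^ 2)⁻¹) * cexp (a * u)
  have hF : ∀ u : ℝ, HasDerivAt F (u * cexp (a * u)) u := by
    intro u
    have h := ((((hasDerivAt_id (u : ℂ)).div_const a).sub_const (a ^ 2)⁻¹).mul
      ((hasDerivAt_id (u : ℂ)).const_mul a).cexp).comp_ofReal
    convert h using 1
    · rfl
    simp only [id]
    field_simp
    ring
  have hFint : IntegrableOn F (Ioi 0) := by
    have := ((integrableOn_Ioi_mul_cexp ha).div_const a).sub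
      ((integrableOn_exp_mul_complex_Ioi ha 0).const_mul (a ^ 2)⁻¹)
    refine IntegrableOn.congr_fun this (fun u _ => ?_) measurableSet_Ioi
    simp only [F, Pi.sub_apply]
    ring
  have hlim := tendsto_zero_of_hasDerivAt_of_integrableOn_Ioi (fun u _ => hF u)
    (integrableOn_Ioi_mul_cexp ha) hFint
  rw [integral_Ioi_of_hasDerivAt_of_tendsto' (fun u _ => hF u) (integrableOn_Ioi_mul_cexp ha) hlim]
  simp [F]

noncomputable def rampExp (c u : ℝ) : ℂ := (max u 0 : ℝ) * cexp (c * u)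

lemma continuous_rampExp (c : ℝ) : Continuous (rampExp c) := by
  unfold rampExp
  fun_prop

lemma rampExp_eq_indicator (c : ℝ) :
    rampExp c = (Ioi 0).indicator fun u : ℝ => (u : ℂ) * cexp (c * u) := by
  ext u
  rcases lt_or_ge 0 u with hu | hu
  · simp [rampExp, hu, hu.le]
  · simp [rampExp, hu, not_lt.2 hu]

lemma integrable_rampExp {c : ℝ} (hc : c < 0) : Integrable (rampExp c) := by
  rw [rampExp_eq_indicator, integrable_indicator_iff measurableSet_Ioi]
  exact integrableOn_Ioi_mul_cexp (by simpa using hc)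

lemma fourier_rampExp {c : ℝ} (hc : c < 0) (ξ : ℝ) :
    𝓕 (rampExp c) ξ = -((((2 * π * ξ : ℝ) : ℂ) + c * I) ^ 2)⁻¹ := by
  set a : ℂ := c - ((2 * π * ξ : ℝ) : ℂ) * I
  have ha : a.re < 0 := by simpa [a] using hc
  have hsq : (((2 * π * ξ : ℝ) : ℂ) + c * I) ^ 2 = -a ^ 2 := by
    linear_combination ((c : ℂ) ^ 2 + ((2 * π * ξ : ℝ) : ℂ) ^ 2) * I_sq
  rw [hsq, inv_neg, neg_neg, ← integral_Ioi_mul_cexp ha, Real.fourier_real_eq_integral_exp_smul,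
    rampExp_eq_indicator, ← integral_indicator measurableSet_Ioi]
  congr 1
  ext u
  rcases lt_or_ge 0 u with hu | hu
  · simp only [indicator_of_mem (mem_Ioi.2 hu), smul_eq_mul, a]
    rw [mul_left_comm, ← Complex.exp_add]
    congr 2
    push_cast
    ring
  · simp [not_lt.2 hu]

lemma integrable_inv_sq_add_mul_I {c : ℝ} (hc : c ≠ 0) :
    Integrable fun t : ℝ => (((t : ℂ) + c * I) ^ 2)⁻¹ := by
  refine Integrable.mono' ((integrable_inv_one_add_sq.comp_div hc).const_mul (c ^ 2)⁻¹)
    (by fun_prop) (ae_of_all _ fun t => ?_)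
  have hnorm : ‖(((t : ℂ) + c * I) ^ 2)⁻¹‖ = (t ^ 2 + c ^ 2)⁻¹ := by
    rw [norm_inv, norm_pow, ← normSq_eq_norm_sq, normSq_add_mul_I]
  rw [hnorm, ← mul_inv, mul_add, mul_one, div_pow, mul_div_cancel₀ _ (pow_ne_zero 2 hc), add_comm]

lemma integrable_fourier_rampExp {c : ℝ} (hc : c < 0) : Integrable (𝓕 (rampExp c)) := by
  rw [funext (fourier_rampExp hc)]
  exact ((integrable_inv_sq_add_mul_I hc.ne).comp_mul_left' (by positivity)).neg

lemma integral_inv_sq_add_mul_I_mul_cexp {c : ℝ} (hc : c < 0) (k : ℝ) :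
    ∫ t : ℝ, (((t : ℂ) + c * I) ^ 2)⁻¹ * cexp (I * k * t) = -(2 * π) * rampExp c k := by
  set G : ℝ → ℂ := fun t => (((t : ℂ) + c * I) ^ 2)⁻¹ * cexp (I * k * t)
  have hinv := congrFun ((continuous_rampExp c).fourierInv_fourier_eq (integrable_rampExp hc)
    (integrable_fourier_rampExp hc)) k
  have hintegrand : ∀ v : ℝ,
      cexp (((-2 * π * v * -k : ℝ) : ℂ) * I) • 𝓕 (rampExp c) v = -G (2 * π * v) := by
    intro v
    rw [fourier_rampExp hc, smul_eq_mul, mul_neg, mul_comm]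
    congr 3
    push_cast
    ring
  rw [Real.fourierInv_eq_fourier_neg, Real.fourier_real_eq_integral_exp_smul] at hinv
  simp_rw [hintegrand, integral_neg, Measure.integral_comp_mul_left G,
    abs_of_pos (by positivity : (0 : ℝ) < (2 * π)⁻¹), Complex.real_smul] at hinv
  rw [← hinv]
  push_cast
  field_simp

lemma integral_inv_sq_mul_cexp_horizontal {c : ℝ} (hc : c < 0) (k : ℝ) :
    ∫ t : ℝ, (((t : ℂ) + c * I) ^ 2)⁻¹ * cexp (I * k * (t + c * I)) = -(2 * π) * max k 0 := by
  have hshift : ∀ t : ℝ, (((t : ℂ) + c * I) ^ 2)⁻¹ * cexp (I * k * (t + c * I)) =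
      cexp (-(k * c)) * ((((t : ℂ) + c * I) ^ 2)⁻¹ * cexp (I * k * t)) := by
    intro t
    rw [mul_left_comm, ← Complex.exp_add]
    congr 2
    linear_combination (k * c : ℂ) * I_sq
  simp_rw [hshift, integral_const_mul, integral_inv_sq_add_mul_I_mul_cexp hc, rampExp]
  rw [mul_left_comm, mul_left_comm _ _ (cexp _), ← Complex.exp_add]
  simp [mul_comm]

/-- The residue computation for the inner Melnikov potential: along a horizontal
line `Im s = c < 0`, `∫ s^{-2} e^{iks} ds = -2πk` for `k ≥ 1` and `= 0` for
`k ≤ -1`; consequently, if `V^[0] = 0`, the inner Melnikov potential equals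
`-Σ_{k≥1} (πk V^[k]/4) e^{ik(θ-v)}`. -/
theorem stmt_13 (c : ℝ) (hc : c < 0) :
    (∀ k : ℤ, 1 ≤ k →
      ∫ t : ℝ, (((t : ℂ) + (c : ℂ) * Complex.I) ^ 2)⁻¹ *
          Complex.exp (Complex.I * k * ((t : ℂ) + (c : ℂ) * Complex.I))
        = -2 * (Real.pi : ℂ) * (k : ℂ)) ∧
    (∀ k : ℤ, k ≤ -1 →
      ∫ t : ℝ, (((t : ℂ) + (c : ℂ) * Complex.I) ^ 2)⁻¹ *
          Complex.exp (Complex.I * k * ((t : ℂ) + (c : ℂ) * Complex.I))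
        = 0) ∧
    (∀ (Vk : ℤ → ℂ), Vk 0 = 0 → ∀ v θ : ℂ,
      ∑' k : ℤ, (Vk k / 8) *
          (∫ t : ℝ, (((t : ℂ) + (c : ℂ) * Complex.I) ^ 2)⁻¹ *
            Complex.exp (Complex.I * k * ((t : ℂ) + (c : ℂ) * Complex.I))) *
          Complex.exp (Complex.I * k * (θ - v))
        = -∑' k : ℤ, (if 1 ≤ k then
            ((Real.pi : ℂ) * (k : ℂ) * Vk k / 4) * Complex.exp (Complex.I * k * (θ - v))
          else 0)) := by
  have hline (k : ℤ) := integral_inv_sq_mul_cexp_horizontal hc k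
  simp only [ofReal_intCast] at hline
  have hk_pos {k : ℤ} (hk : 0 ≤ k) : max (k : ℝ) 0 = k := max_eq_left (mod_cast hk)
  have hk_neg {k : ℤ} (hk : k ≤ 0) : max (k : ℝ) 0 = 0 := max_eq_right (mod_cast hk)
  refine ⟨fun k hk => ?_, fun k hk => ?_, fun Vk _ v θ => ?_⟩
  · rw [hline, hk_pos (by omega)]
    push_cast
    ring
  · simp [hline, hk_neg (by omega : k ≤ 0)]
  · rw [← tsum_neg]
    refine tsum_congr fun k => ?_
    rw [hline]
    split_ifs with hk
    · rw [hk_pos (by omega)]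
      push_cast
      ring
    · simp [hk_neg (by omega : k ≤ 0)]
end
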